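/- In the polynomial ring ℚ(x)[Ax1, Axu] localized appropriately (equivalently: for all x, u with u^2*x - u + 1 ≠ 0 and x ≠ 0), the system consisting of the kernel equation (u - 1)*Axu - Axu*u^2*x + Ax1*u*x - u + 1 = 0, valid for all u, implies Ax1^2*x - Ax1 + 1 = 0. -/

import Mathlib

/-! Kernel method: choose `u` to be a root of the kernel `u ^ 2 * x - u + 1`, which exists over `ℂ`
because `x ≠ 0`. The kernel equation at that `u` loses its `Axu u` term and, using the root
equation, reduces to `(Ax1 - u) * u * x = 0`; hence `Ax1 = u` is itself a root of the kernel. -/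

open Polynomial

theorem exists_sq_mul_sub_add_one_eq_zero {K : Type*} [Field K] [IsAlgClosed K] {x : K}
    (hx : x ≠ 0) : ∃ u : K, u ^ 2 * x - u + 1 = 0 := by
  obtain ⟨u, hu⟩ := IsAlgClosed.exists_root (C x * X ^ 2 + C (-1) * X + C 1)
    (by rw [degree_quadratic hx]; decide)
  refine ⟨u, ?_⟩
  simp only [IsRoot, eval_add, eval_mul, eval_C, eval_pow, eval_X] at hu
  linear_combination hu

theorem eq_root_of_kernel_eq {R : Type*} [CommRing R] [IsDomain R]
    {x A u c : R} (hx : x ≠ 0) (hu : u ^ 2 * x - u + 1 = 0)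
    (hker : (u - 1) * c - c * u ^ 2 * x + A * u * x - u + 1 = 0) : A = u := by
  have hu0 : u ≠ 0 := by rintro rfl; simp at hu
  have h : (A - u) * (u * x) = 0 := by linear_combination hker + c * hu - hu
  exact sub_eq_zero.1 ((mul_eq_zero.1 h).resolve_right (mul_ne_zero hu0 hx))

theorem stmt_6 (x : ℂ) (hx : x ≠ 0) (Ax1 : ℂ) (Axu : ℂ → ℂ)
    (hker : ∀ u : ℂ, (u - 1) * Axu u - Axu u * u^2 * x + Ax1 * u * x - u + 1 = 0) :
    Ax1^2 * x - Ax1 + 1 = 0 := by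
  obtain ⟨u, hu⟩ := exists_sq_mul_sub_add_one_eq_zero hx
  rwa [eq_root_of_kernel_eq hx hu (hker u)]
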